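/- arXiv:2011.04926 — 3 statements merged into one kernel-verified Lean document; each statement's English description precedes it below -/
import Mathlib

section
/- Under Assumptions 1, 2, 3 on h1 and h2, every Y ∈ (ℝ^d)^n such that y_i ∈ {x_1, …, x_n} for all i and y_i = y_j for some i ≠ j is a sub-optimal strict local minimum of g_SP, i.e., g_SP(Y) is strictly greater than the global minimum value (1/2)·ξ(1) and there is ε > 0 with g_SP(Y') > g_SP(Y) for every Y' ≠ Y with ‖Y' − Y‖ < ε. The set of such Y has exactly n^n − n! elements, so g_SP has at least n^n − n! sub-optimal strict local minima. -/
/-!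
Write `m_k = #{i | y_i = x_k}` (`fiberCard x Y k`). Since a continuous `f` can take arbitrary
values at finitely many points, the supremum defining `g_SP` splits into independent suprema:
each `x_k` together with the `m_k` generated points sitting on it contributes `ξ(m_k)`, and every
generated point away from the data contributes `sup h2 = 0`. Hence `2n · g_SP(Y) = ∑_k ξ(m_k)`.
If `Y` takes values in the data with a collision, Assumption 2 gives `∑_k ξ(m_k) > n ξ(1)`.
A small perturbation `Y'` of such a `Y` can only move points off the data, so every `m_k` weakly
decreases and one strictly decreases when `Y' ≠ Y`; by Assumption 3 the loss strictly increases.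
Finally these `Y` are exactly `x ∘ g` with `g : Fin n → Fin n` not injective.
-/

open scoped BigOperators

/-- ξ(m) = sup_{t∈ℝ} (h1(t) + m·h2(−t)). -/
noncomputable def xi (h1 h2 : ℝ → ℝ) (m : ℕ) : ℝ :=
  sSup {s : ℝ | ∃ t : ℝ, s = h1 t + (m : ℝ) * h2 (-t)}

/-- The separable-GAN loss. -/
noncomputable def gSP {d n : ℕ} (h1 h2 : ℝ → ℝ)
    (x Y : Fin n → EuclideanSpace ℝ (Fin d)) : ℝ :=
  (1 / (2 * (n : ℝ))) * sSup {s : ℝ |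
    ∃ f : EuclideanSpace ℝ (Fin d) → ℝ, Continuous f ∧
      s = ∑ i, (h1 (f (x i)) + h2 (-(f (Y i))))}

open Finset Function Topology
open scoped Nat

theorem Set.Finite.exists_continuous_eqOn {X : Type*} [TopologicalSpace X] [NormalSpace X]
    [T1Space X] {s : Set X} (hs : s.Finite) (v : X → ℝ) :
    ∃ f : X → ℝ, Continuous f ∧ Set.EqOn f v s := by
  have : Finite s := hs
  obtain ⟨g, hg⟩ := ContinuousMap.exists_restrict_eq hs.isClosed
    ⟨s.domRestrict v, continuous_of_discreteTopology⟩
  exact ⟨g, g.continuous, fun p hp => DFunLike.congr_fun hg ⟨p, hp⟩⟩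

section Xi

variable {h1 h2 : ℝ → ℝ}

lemma bddAbove_xi_set (hh1 : ∀ t, h1 t ≤ 0) (hh2 : ∀ t, h2 t ≤ 0) (m : ℕ) :
    BddAbove {s : ℝ | ∃ t : ℝ, s = h1 t + (m : ℝ) * h2 (-t)} := by
  refine ⟨0, ?_⟩
  rintro _ ⟨t, rfl⟩
  nlinarith [hh1 t, hh2 (-t), (m.cast_nonneg : (0 : ℝ) ≤ m)]

lemma le_xi (hh1 : ∀ t, h1 t ≤ 0) (hh2 : ∀ t, h2 t ≤ 0) (m : ℕ) (t : ℝ) :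
    h1 t + m * h2 (-t) ≤ xi h1 h2 m :=
  le_csSup (bddAbove_xi_set hh1 hh2 m) ⟨t, rfl⟩

lemma exists_lt_of_lt_xi {m : ℕ} {b : ℝ} (hb : b < xi h1 h2 m) :
    ∃ t, b < h1 t + m * h2 (-t) := by
  rw [xi] at hb
  obtain ⟨_, ⟨t, rfl⟩, ht⟩ := exists_lt_of_lt_csSup (by exact ⟨_, 0, rfl⟩) hb
  exact ⟨t, ht⟩

lemma xi_zero (A1a : IsLUB (Set.range h1) 0) : xi h1 h2 0 = 0 := by
  have : {s : ℝ | ∃ t : ℝ, s = h1 t + ((0 : ℕ) : ℝ) * h2 (-t)} = Set.range h1 := by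
    ext s; simp [eq_comm]
  rw [xi, this, A1a.csSup_eq (Set.range_nonempty h1)]

lemma strictAntiOn_xi {n : ℕ} (A3 : ∀ m : ℕ, 1 ≤ m → m ≤ n → xi h1 h2 m < xi h1 h2 (m - 1)) :
    StrictAntiOn (xi h1 h2) (Set.Iic n) :=
  strictAntiOn_Iic_of_succ_lt fun m hm => by simpa using A3 (m + 1) (by omega) hm

lemma natCast_mul_xi_one_le (A1a : IsLUB (Set.range h1) 0) {n : ℕ}
    (A2 : ∀ m : ℕ, 2 ≤ m → m ≤ n → (m : ℝ) * xi h1 h2 1 < xi h1 h2 m) {m : ℕ} (hm : m ≤ n) :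
    m * xi h1 h2 1 ≤ xi h1 h2 m := by
  obtain rfl | rfl | hm2 : m = 0 ∨ m = 1 ∨ 2 ≤ m := by omega
  · simp [xi_zero A1a]
  · simp
  · exact (A2 m hm2 hm).le

end Xi

lemma eventually_forall_eq_imp {ι E : Type*} [Finite ι] [TopologicalSpace E] [T1Space E]
    (x Y : ι → E) :
    ∀ᶠ Y' in 𝓝 Y, ∀ i k, Y' i = x k → Y i = x k := by
  simp only [Filter.eventually_all]
  intro i k
  by_cases h : Y i = x k
  · exact Filter.Eventually.of_forall fun _ _ => h
  · filter_upwards [(continuous_apply i).continuousAt.eventually (eventually_ne_nhds h)]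
      with Y' hY' h' using absurd h' hY'

section Fiber

variable {ι E : Type*} [Fintype ι] [DecidableEq E] {x : ι → E}

def fiberCard (x Y : ι → E) (k : ι) : ℕ := #{i | Y i = x k}

lemma fiberCard_le_card (Y : ι → E) (k : ι) : fiberCard x Y k ≤ Fintype.card ι :=
  card_filter_le _ _

lemma sum_ite_eq_indicator_range (hx : Injective x) {M : Type*} [AddCommMonoid M] (F : E → M)
    (p : E) : ∑ k, (if p = x k then F (x k) else 0) = (Set.range x).indicator F p := by
  by_cases hp : p ∈ Set.range x
  · obtain ⟨a, rfl⟩ := hp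
    rw [Set.indicator_of_mem (Set.mem_range_self a), Fintype.sum_eq_single a, if_pos rfl]
    exact fun k hk => if_neg fun h => hk (hx h).symm
  · rw [Set.indicator_of_notMem hp]
    exact sum_eq_zero fun k _ => if_neg fun h => hp ⟨k, h.symm⟩

lemma sum_comp_eq_sum_fiberCard_add (hx : Injective x) (Y : ι → E) (F : E → ℝ) :
    ∑ i, F (Y i) = ∑ k, fiberCard x Y k * F (x k) + ∑ i, (Set.range x)ᶜ.indicator F (Y i) := by
  have hfib : ∀ k, (fiberCard x Y k : ℝ) * F (x k) = ∑ i, if Y i = x k then F (x k) else 0 := by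
    intro k
    rw [sum_ite, sum_const_zero, add_zero, sum_const, nsmul_eq_mul, fiberCard]
  simp_rw [hfib]
  rw [sum_comm, ← sum_add_distrib]
  refine sum_congr rfl fun i _ => ?_
  rw [sum_ite_eq_indicator_range hx, Set.indicator_self_add_compl_apply]

lemma sum_fiberCard (hx : Injective x) {Y : ι → E} (hY : ∀ i, Y i ∈ Set.range x) :
    ∑ k, (fiberCard x Y k : ℝ) = Fintype.card ι := by
  simpa [hY] using (sum_comp_eq_sum_fiberCard_add hx Y fun _ => (1 : ℝ)).symm

variable {h1 h2 : ℝ → ℝ}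

lemma sum_le_sum_xi_fiberCard (hx : Injective x) (hh1 : ∀ t, h1 t ≤ 0) (hh2 : ∀ t, h2 t ≤ 0)
    (Y : ι → E) (f : E → ℝ) :
    ∑ i, (h1 (f (x i)) + h2 (-f (Y i))) ≤ ∑ k, xi h1 h2 (fiberCard x Y k) := by
  have hstray : ∑ i, (Set.range x)ᶜ.indicator (fun p => h2 (-f p)) (Y i) ≤ 0 :=
    sum_nonpos fun i _ => Set.indicator_nonpos (fun _ _ => hh2 _) _
  calc ∑ i, (h1 (f (x i)) + h2 (-f (Y i)))
      = ∑ k, (h1 (f (x k)) + fiberCard x Y k * h2 (-f (x k)))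
          + ∑ i, (Set.range x)ᶜ.indicator (fun p => h2 (-f p)) (Y i) := by
        rw [sum_add_distrib, sum_add_distrib, add_assoc,
          sum_comp_eq_sum_fiberCard_add hx Y fun p => h2 (-f p)]
    _ ≤ ∑ k, xi h1 h2 (fiberCard x Y k) + 0 :=
        add_le_add (sum_le_sum fun k _ => le_xi hh1 hh2 _ _) hstray
    _ = _ := add_zero _

lemma fiberCard_le_of_imp {Y Y' : ι → E} (h : ∀ i k, Y' i = x k → Y i = x k) (k : ι) :
    fiberCard x Y' k ≤ fiberCard x Y k :=
  card_le_card <| monotone_filter_right _ fun i _ => h i k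

lemma exists_fiberCard_lt_of_imp {Y Y' : ι → E} (h : ∀ i k, Y' i = x k → Y i = x k)
    (hY : ∀ i, Y i ∈ Set.range x) (hne : Y' ≠ Y) : ∃ k, fiberCard x Y' k < fiberCard x Y k := by
  obtain ⟨i, hi⟩ := Function.ne_iff.1 hne
  obtain ⟨k, hk⟩ := hY i
  refine ⟨k, card_lt_card ⟨monotone_filter_right _ fun i _ => h i k, not_subset.2 ⟨i, ?_, ?_⟩⟩⟩
  · simp [hk]
  · simpa [← hk] using hi

lemma sum_lt_sum_of_imp {u : ℕ → ℝ} (hu : StrictAntiOn u (Set.Iic (Fintype.card ι)))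
    {Y Y' : ι → E} (h : ∀ i k, Y' i = x k → Y i = x k) (hY : ∀ i, Y i ∈ Set.range x)
    (hne : Y' ≠ Y) : ∑ k, u (fiberCard x Y k) < ∑ k, u (fiberCard x Y' k) := by
  obtain ⟨k, hk⟩ := exists_fiberCard_lt_of_imp h hY hne
  refine sum_lt_sum (fun k _ => hu.antitoneOn ?_ ?_ (fiberCard_le_of_imp h k))
    ⟨k, mem_univ k, hu ?_ ?_ hk⟩ <;> exact fiberCard_le_card _ _

lemma card_mul_lt_sum_fiberCard {u : ℕ → ℝ} (hle : ∀ m ≤ Fintype.card ι, m * u 1 ≤ u m)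
    (hlt : ∀ m, 2 ≤ m → m ≤ Fintype.card ι → m * u 1 < u m) (hx : Injective x) {Y : ι → E}
    (hY : ∀ i, Y i ∈ Set.range x) {i j : ι} (hij : i ≠ j) (hYij : Y i = Y j) :
    Fintype.card ι * u 1 < ∑ k, u (fiberCard x Y k) := by
  obtain ⟨k, hk⟩ := hY i
  have hk2 : 2 ≤ fiberCard x Y k := one_lt_card.2 ⟨i, by simp [hk], j, by simp [← hYij, hk], hij⟩
  rw [← sum_fiberCard hx hY, sum_mul]
  exact sum_lt_sum (fun k _ => hle _ (fiberCard_le_card _ _))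
    ⟨k, mem_univ k, hlt _ hk2 (fiberCard_le_card _ _)⟩

end Fiber

section Loss

variable {ι E : Type*} [Fintype ι] [MetricSpace E] [DecidableEq E] {h1 h2 : ℝ → ℝ} {x : ι → E}

lemma exists_continuous_sum_xi_fiberCard_sub_le (hx : Injective x) (A1b : IsLUB (Set.range h2) 0)
    (Y : ι → E) {ε : ℝ} (hε : 0 < ε) :
    ∃ f : E → ℝ, Continuous f ∧ ∑ k, xi h1 h2 (fiberCard x Y k) - 2 * Fintype.card ι * ε
      ≤ ∑ i, (h1 (f (x i)) + h2 (-f (Y i))) := by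
  choose t ht using fun k => exists_lt_of_lt_xi (sub_lt_self (xi h1 h2 (fiberCard x Y k)) hε)
  obtain ⟨_, ⟨u, rfl⟩, hu, -⟩ := A1b.exists_between (neg_lt_zero.2 hε)
  obtain ⟨f, hf, hfv⟩ := ((Set.finite_range x).union (Set.finite_range Y)).exists_continuous_eqOn
    (extend x t fun _ => -u)
  have hfx : ∀ k, f (x k) = t k := fun k =>
    (hfv (Or.inl ⟨k, rfl⟩)).trans (hx.extend_apply _ _ _)
  have hfY : ∀ i, Y i ∉ Set.range x → f (Y i) = -u := fun i hi =>
    (hfv (Or.inr ⟨i, rfl⟩)).trans (extend_apply' _ _ _ hi)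
  have hstray : ∀ i, -ε ≤ (Set.range x)ᶜ.indicator (fun p => h2 (-f p)) (Y i) := by
    intro i
    by_cases hi : Y i ∈ Set.range x
    · simp [hi, hε.le]
    · simp [hi, hfY i hi, hu.le]
  refine ⟨f, hf, ?_⟩
  calc ∑ k, xi h1 h2 (fiberCard x Y k) - 2 * Fintype.card ι * ε
      ≤ ∑ k, (xi h1 h2 (fiberCard x Y k) - ε) + ∑ _i : ι, -ε := by
        simp only [sum_sub_distrib, sum_neg_distrib, sum_const, card_univ, nsmul_eq_mul]
        linarith [mul_nonneg (Nat.cast_nonneg (Fintype.card ι) : (0 : ℝ) ≤ _) hε.le]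
    _ ≤ ∑ k, (h1 (f (x k)) + fiberCard x Y k * h2 (-f (x k)))
          + ∑ i, (Set.range x)ᶜ.indicator (fun p => h2 (-f p)) (Y i) :=
        add_le_add (sum_le_sum fun k _ => by rw [hfx]; exact (ht k).le)
          (sum_le_sum fun i _ => hstray i)
    _ = ∑ i, (h1 (f (x i)) + h2 (-f (Y i))) := by
        rw [sum_add_distrib, sum_add_distrib, add_assoc,
          sum_comp_eq_sum_fiberCard_add hx Y fun p => h2 (-f p)]

lemma sSup_loss_eq (hx : Injective x) (A1a : IsLUB (Set.range h1) 0)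
    (A1b : IsLUB (Set.range h2) 0) (Y : ι → E) :
    sSup {s : ℝ | ∃ f : E → ℝ, Continuous f ∧ s = ∑ i, (h1 (f (x i)) + h2 (-(f (Y i))))}
      = ∑ k, xi h1 h2 (fiberCard x Y k) := by
  have hh1 : ∀ t, h1 t ≤ 0 := fun t => A1a.1 ⟨t, rfl⟩
  have hh2 : ∀ t, h2 t ≤ 0 := fun t => A1b.1 ⟨t, rfl⟩
  have hbdd : BddAbove {s : ℝ | ∃ f : E → ℝ, Continuous f ∧
      s = ∑ i, (h1 (f (x i)) + h2 (-(f (Y i))))} := by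
    refine ⟨∑ k, xi h1 h2 (fiberCard x Y k), ?_⟩
    rintro _ ⟨f, -, rfl⟩
    exact sum_le_sum_xi_fiberCard hx hh1 hh2 Y f
  refine le_antisymm (csSup_le ⟨_, 0, continuous_const, rfl⟩ ?_) ?_
  · rintro _ ⟨f, -, rfl⟩
    exact sum_le_sum_xi_fiberCard hx hh1 hh2 Y f
  · refine le_of_forall_pos_le_add fun δ hδ => ?_
    obtain ⟨ε, hε, hεδ⟩ : ∃ ε > 0, 2 * Fintype.card ι * ε ≤ δ := by
      refine ⟨δ / (2 * Fintype.card ι + 1), by positivity, ?_⟩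
      rw [mul_div_assoc', div_le_iff₀ (by positivity), mul_add, mul_one, mul_comm δ]
      exact le_add_of_nonneg_right hδ.le
    obtain ⟨f, hf, hfY⟩ := exists_continuous_sum_xi_fiberCard_sub_le hx A1b Y hε
    linarith [le_csSup hbdd ⟨f, hf, rfl⟩]

end Loss

lemma ncard_setOf_not_injective (α : Type*) [Fintype α] :
    {g : α → α | ¬ Injective g}.ncard = Fintype.card α ^ Fintype.card α - (Fintype.card α)! := by
  classical
  rw [← Set.compl_ofPred, Set.ncard_compl, ← Nat.card_coe_set_eq,
    Nat.card_congr (α := {g : α → α | Injective g}) (Equiv.subtypeInjectiveEquivEmbedding α α),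
    Nat.card_eq_fintype_card, Nat.card_eq_fintype_card, Fintype.card_fun,
    Fintype.card_embedding_eq, Nat.descFactorial_self]

lemma setOf_forall_exists_eq_and_exists_eq_eq_image {ι E : Type*} {x : ι → E}
    (hx : Injective x) :
    {Y : ι → E | (∀ i, ∃ k, Y i = x k) ∧ ∃ i j, i ≠ j ∧ Y i = Y j}
      = (x ∘ ·) '' {g | ¬ Injective g} := by
  ext Y
  constructor
  · rintro ⟨hY, i, j, hij, hYij⟩
    choose g hg using hY
    refine ⟨g, fun hg' => hij (hg' (hx ?_)), funext fun i => (hg i).symm⟩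
    rw [← hg, ← hg, hYij]
  · rintro ⟨g, hg, rfl⟩
    obtain ⟨i, j, hgij, hij⟩ := Function.not_injective_iff.1 hg
    exact ⟨fun i => ⟨g i, rfl⟩, i, j, hij, by simp [hgij]⟩

lemma gSP_eq {d n : ℕ} [DecidableEq (EuclideanSpace ℝ (Fin d))] {h1 h2 : ℝ → ℝ}
    {x : Fin n → EuclideanSpace ℝ (Fin d)} (hx : Injective x) (A1a : IsLUB (Set.range h1) 0)
    (A1b : IsLUB (Set.range h2) 0) (Y : Fin n → EuclideanSpace ℝ (Fin d)) :
    gSP h1 h2 x Y = (∑ k, xi h1 h2 (fiberCard x Y k)) / (2 * n) := by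
  rw [gSP, sSup_loss_eq hx A1a A1b, one_div_mul_eq_div]

theorem stmt1_general {d n : ℕ}
    (x : Fin n → EuclideanSpace ℝ (Fin d)) (hx : Function.Injective x)
    (h1 h2 : ℝ → ℝ)
    (A1a : IsLUB (Set.range h1) 0) (A1b : IsLUB (Set.range h2) 0)
    (A2 : ∀ m : ℕ, 2 ≤ m → m ≤ n → (m : ℝ) * xi h1 h2 1 < xi h1 h2 m)
    (A3 : ∀ m : ℕ, 1 ≤ m → m ≤ n → xi h1 h2 m < xi h1 h2 (m - 1)) :
    (∀ Y : Fin n → EuclideanSpace ℝ (Fin d),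
        (∀ i, ∃ k, Y i = x k) → (∃ i j, i ≠ j ∧ Y i = Y j) →
        ((1 / 2) * xi h1 h2 1 < gSP h1 h2 x Y ∧
          ∃ ε > 0, ∀ Y' : Fin n → EuclideanSpace ℝ (Fin d),
            Y' ≠ Y → dist Y' Y < ε → gSP h1 h2 x Y < gSP h1 h2 x Y')) ∧
    Set.ncard {Y : Fin n → EuclideanSpace ℝ (Fin d) |
        (∀ i, ∃ k, Y i = x k) ∧ ∃ i j, i ≠ j ∧ Y i = Y j}
      = n ^ n - n.factorial := by
  classical
  refine ⟨fun Y hY ⟨i, j, hij, hYij⟩ => ?_, ?_⟩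
  · have hY' : ∀ i, Y i ∈ Set.range x := fun i => (hY i).imp fun _ => Eq.symm
    have hn : (0 : ℝ) < 2 * n := by have := i.pos; positivity
    simp only [gSP_eq hx A1a A1b]
    refine ⟨?_, ?_⟩
    · have key := card_mul_lt_sum_fiberCard (by simpa using fun m => natCast_mul_xi_one_le A1a A2)
        (by simpa using A2) hx hY' hij hYij
      rw [Fintype.card_fin] at key
      rw [lt_div_iff₀ hn]
      linarith
    · obtain ⟨ε, hε, hball⟩ := Metric.eventually_nhds_iff.1 (eventually_forall_eq_imp x Y)
      refine ⟨ε, hε, fun Y' hne hdist => div_lt_div_of_pos_right ?_ hn⟩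
      exact sum_lt_sum_of_imp (by simpa using strictAntiOn_xi A3) (hball hdist) hY' hne
  · rw [setOf_forall_exists_eq_and_exists_eq_eq_image hx,
      Set.ncard_image_of_injective _ hx.comp_left, ncard_setOf_not_injective, Fintype.card_fin]

theorem stmt1 {d n : ℕ} (hd : 1 ≤ d) (hn : 1 ≤ n)
    (x : Fin n → EuclideanSpace ℝ (Fin d)) (hx : Function.Injective x)
    (h1 h2 : ℝ → ℝ)
    (A1a : IsLUB (Set.range h1) 0) (A1b : IsLUB (Set.range h2) 0)
    (A2 : ∀ m : ℕ, 2 ≤ m → m ≤ n → (m : ℝ) * xi h1 h2 1 < xi h1 h2 m)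
    (A3 : ∀ m : ℕ, 1 ≤ m → m ≤ n → xi h1 h2 m < xi h1 h2 (m - 1)) :
    (∀ Y : Fin n → EuclideanSpace ℝ (Fin d),
        (∀ i, ∃ k, Y i = x k) → (∃ i j, i ≠ j ∧ Y i = Y j) →
        ((1 / 2) * xi h1 h2 1 < gSP h1 h2 x Y ∧
          ∃ ε > 0, ∀ Y' : Fin n → EuclideanSpace ℝ (Fin d),
            Y' ≠ Y → dist Y' Y < ε → gSP h1 h2 x Y < gSP h1 h2 x Y')) ∧
    Set.ncard {Y : Fin n → EuclideanSpace ℝ (Fin d) |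
        (∀ i, ∃ k, Y i = x k) ∧ ∃ i j, i ≠ j ∧ Y i = Y j}
      = n ^ n - n.factorial :=
  stmt1_general x hx h1 h2 A1a A1b A2 A3
end

section
/- Suppose h1, h2 : ℝ → ℝ satisfy sup_{t∈ℝ} h1(t) = sup_{t∈ℝ} h2(t) = 0, and x_1, …, x_n ∈ ℝ^d are distinct. Then for every Y = (y_1, …, y_n) ∈ (ℝ^d)^n, the separable-GAN loss evaluates exactly to g_SP(Y) = (1/(2n)) · Σ_{i=1}^n ξ(m_i), where m_i = #{j ∈ {1,…,n} : y_j = x_i} and ξ(m) = sup_{t∈ℝ}(h1(t) + m·h2(−t)). -/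
/-!
After regrouping the unmatched terms, the objective of a continuous `f` is
`∑ i, (h1 (f xᵢ) + mᵢ h2 (-f xᵢ)) + ∑_{yⱼ ∉ {xᵢ}} h2 (-f yⱼ)`. Since a continuous function can take
arbitrary prescribed values on a finite set, the values `f xᵢ` and the common value of `f` on the
unmatched `yⱼ` can be chosen independently: the first sum then has supremum `∑ i, ξ(mᵢ)`, and the
second is `≤ 0` with supremum `0` because `sup h2 = 0`.
-/

open scoped BigOperators

open Set
open scoped Pointwise

section IsLUB

variable {ι α G : Type*} [AddCommGroup G] [PartialOrder G] [IsOrderedAddMonoid G]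

theorem isLUB_finsetSum {s : Finset ι} {S : ι → Set G} {a : ι → G}
    (h : ∀ i ∈ s, IsLUB (S i) (a i)) : IsLUB (∑ i ∈ s, S i) (∑ i ∈ s, a i) := by
  classical
  induction s using Finset.induction_on with
  | empty => exact isLUB_singleton
  | insert j s hj ih =>
    rw [Finset.sum_insert hj, Finset.sum_insert hj]
    exact (h j (s.mem_insert_self j)).add (ih fun i hi => h i (Finset.mem_insert_of_mem hi))

theorem isLUB_range_sum [Fintype ι] {φ : ι → α → G} {a : ι → G}
    (h : ∀ i, IsLUB (range (φ i)) (a i)) :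
    IsLUB (range fun t : ι → α => ∑ i, φ i (t i)) (∑ i, a i) := by
  have hrange : (range fun t : ι → α => ∑ i, φ i (t i)) = ∑ i, range (φ i) := by
    rw [← image_fintype_sum_pi, ← range_piMap, ← range_comp]
    rfl
  rw [hrange]
  exact isLUB_finsetSum fun i _ => h i

end IsLUB

theorem exists_continuous_eqOn_of_finite {E : Type*} [TopologicalSpace E] [NormalSpace E]
    [T1Space E] {P : Set E} (hP : P.Finite) (v : E → ℝ) :
    ∃ f : C(E, ℝ), EqOn f v P := by
  have : Finite P := hP.to_subtype
  obtain ⟨f, hf⟩ :=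
    ContinuousMap.exists_restrict_eq hP.isClosed ⟨P.domRestrict v, continuous_of_discreteTopology⟩
  exact ⟨f, fun p hp => ContinuousMap.congr_fun hf ⟨p, hp⟩⟩

theorem sum_comp_eq_sum_ncard_smul_add {ι κ E M : Type*} [Fintype ι] [Fintype κ]
    [AddCommMonoid M] {x : ι → E} (hx : Function.Injective x) (Y : κ → E) (g : E → M) :
    ∑ j, g (Y j) = ∑ i, {j | Y j = x i}.ncard • g (x i) + ∑ j, (range x)ᶜ.indicator g (Y j) := by
  classical
  have hmatched : ∀ j, (range x).indicator g (Y j) = ∑ i, if Y j = x i then g (x i) else 0 := by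
    intro j
    by_cases hj : Y j ∈ range x
    · obtain ⟨i₀, hi₀⟩ := hj
      simp_rw [← hi₀, hx.eq_iff]
      simp
    · rw [indicator_of_notMem hj]
      exact (Finset.sum_eq_zero fun i _ => if_neg fun h => hj ⟨i, h.symm⟩).symm
  calc ∑ j, g (Y j)
      = ∑ j, ((range x).indicator g (Y j) + (range x)ᶜ.indicator g (Y j)) := by
        simp_rw [indicator_self_add_compl_apply]
    _ = _ := by
        rw [Finset.sum_add_distrib, Finset.sum_congr rfl fun j _ => hmatched j, Finset.sum_comm]
        congr! 2 with i
        rw [← Finset.sum_filter, Finset.sum_const, ← Set.ncard_coe_finset]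
        congr 2
        ext; simp

theorem isLUB_xi {h1 h2 : ℝ → ℝ} (hh1 : 0 ∈ upperBounds (range h1))
    (hh2 : 0 ∈ upperBounds (range h2)) (m : ℕ) :
    IsLUB (range fun t => h1 t + m * h2 (-t)) (xi h1 h2 m) := by
  have hset : {s : ℝ | ∃ t : ℝ, s = h1 t + (m : ℝ) * h2 (-t)}
      = range fun t => h1 t + m * h2 (-t) := by
    ext; simp [eq_comm]
  rw [xi, hset]
  refine isLUB_csSup (range_nonempty _) ⟨0, forall_mem_range.2 fun t => ?_⟩
  exact add_nonpos (hh1 ⟨t, rfl⟩) (mul_nonpos_of_nonneg_of_nonpos m.cast_nonneg (hh2 ⟨-t, rfl⟩))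

section Loss

variable {ι E : Type*} [Fintype ι] {x : ι → E} (hx : Function.Injective x) (Y : ι → E)
  {h1 h2 : ℝ → ℝ}
include hx

theorem sum_loss_eq (f : E → ℝ) :
    ∑ i, (h1 (f (x i)) + h2 (-f (Y i)))
      = ∑ i, (h1 (f (x i)) + {j | Y j = x i}.ncard * h2 (-f (x i)))
        + ∑ j, (range x)ᶜ.indicator (fun p => h2 (-f p)) (Y j) := by
  rw [Finset.sum_add_distrib, sum_comp_eq_sum_ncard_smul_add hx Y fun p => h2 (-f p),
    Finset.sum_add_distrib, add_assoc]
  simp only [nsmul_eq_mul]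

theorem sum_loss_le_sum_xi (hh1 : 0 ∈ upperBounds (range h1)) (hh2 : 0 ∈ upperBounds (range h2))
    (f : E → ℝ) :
    ∑ i, (h1 (f (x i)) + h2 (-f (Y i))) ≤ ∑ i, xi h1 h2 {j | Y j = x i}.ncard := by
  rw [sum_loss_eq hx Y f, ← add_zero (∑ i, xi _ _ _)]
  gcongr with i _ j
  · exact (isLUB_xi hh1 hh2 _).1 ⟨f (x i), rfl⟩
  · exact Finset.sum_nonpos fun j _ => indicator_nonpos (fun p _ => hh2 ⟨_, rfl⟩) _

theorem exists_continuous_sum_loss_ge [TopologicalSpace E] [NormalSpace E] [T1Space E]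
    (hh2 : 0 ∈ upperBounds (range h2)) (t : ι → ℝ) (u : ℝ) :
    ∃ f : C(E, ℝ), ∑ i, (h1 (t i) + {j | Y j = x i}.ncard * h2 (-t i)) + Fintype.card ι * h2 u
      ≤ ∑ i, (h1 (f (x i)) + h2 (-f (Y i))) := by
  obtain ⟨f, hf⟩ := exists_continuous_eqOn_of_finite ((finite_range x).union (finite_range Y))
    (Function.extend x t fun _ => -u)
  refine ⟨f, ?_⟩
  have hfx : ∀ i, f (x i) = t i := fun i => (hf (Or.inl ⟨i, rfl⟩)).trans (hx.extend_apply _ _ _)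
  rw [sum_loss_eq hx Y f]
  simp only [hfx]
  gcongr
  rw [← nsmul_eq_mul, ← Finset.card_univ, ← Finset.sum_const]
  refine Finset.sum_le_sum fun j _ => ?_
  by_cases hj : Y j ∈ range x
  · rw [indicator_of_notMem (notMem_compl_iff.2 hj)]
    exact hh2 ⟨u, rfl⟩
  · rw [indicator_of_mem hj, hf (Or.inr ⟨j, rfl⟩),
      Function.extend_apply' _ _ _ fun ⟨i, hi⟩ => hj ⟨i, hi⟩, neg_neg]

end Loss

theorem stmt2_general {d n : ℕ}
    (x : Fin n → EuclideanSpace ℝ (Fin d)) (hx : Function.Injective x)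
    (h1 h2 : ℝ → ℝ)
    (A1a : IsLUB (Set.range h1) 0) (A1b : IsLUB (Set.range h2) 0) :
    ∀ Y : Fin n → EuclideanSpace ℝ (Fin d),
      gSP h1 h2 x Y
        = (1 / (2 * (n : ℝ))) *
            ∑ i, xi h1 h2 (Set.ncard {j : Fin n | Y j = x i}) := by
  intro Y
  have hbound := (isLUB_range_sum fun i => isLUB_xi A1a.1 A1b.1 {j | Y j = x i}.ncard).add
    (A1b.mul_left (Fintype.card (Fin n)).cast_nonneg)
  rw [mul_zero, add_zero] at hbound
  have hloss : IsLUB {s : ℝ | ∃ f : EuclideanSpace ℝ (Fin d) → ℝ, Continuous f ∧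
      s = ∑ i, (h1 (f (x i)) + h2 (-(f (Y i))))} (∑ i, xi h1 h2 {j | Y j = x i}.ncard) := by
    refine ⟨?_, fun b hb => hbound.2 ?_⟩
    · rintro _ ⟨f, -, rfl⟩
      exact sum_loss_le_sum_xi hx Y A1a.1 A1b.1 f
    · rintro _ ⟨_, ⟨t, rfl⟩, _, ⟨_, ⟨u, rfl⟩, rfl⟩, rfl⟩
      obtain ⟨f, hf⟩ := exists_continuous_sum_loss_ge hx Y A1b.1 t u
      exact hf.trans (hb ⟨f, f.continuous, rfl⟩)
  rw [gSP, hloss.csSup_eq ⟨_, 0, continuous_const, rfl⟩]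

theorem stmt2 {d n : ℕ} (hd : 1 ≤ d) (hn : 1 ≤ n)
    (x : Fin n → EuclideanSpace ℝ (Fin d)) (hx : Function.Injective x)
    (h1 h2 : ℝ → ℝ)
    (A1a : IsLUB (Set.range h1) 0) (A1b : IsLUB (Set.range h2) 0) :
    ∀ Y : Fin n → EuclideanSpace ℝ (Fin d),
      gSP h1 h2 x Y
        = (1 / (2 * (n : ℝ))) *
            ∑ i, xi h1 h2 (Set.ncard {j : Fin n | Y j = x i}) :=
  stmt2_general x hx h1 h2 A1a A1b
end

section
/- Suppose h : ℝ → ℝ is concave with sup_{t∈ℝ} h(t) = 0 and h(0) < 0, and x_1, …, x_n ∈ ℝ^d are distinct. Let Y = (y_1, …, y_n) ∈ (ℝ^d)^n satisfy y_i ∈ {x_1, …, x_n} for every i, and let σ : {1,…,n} → {1,…,n} be the unique map with y_i = x_{σ(i)}. Then the RpGAN loss evaluates exactly to g_R(Y) = (h(0)/n) · #{i ∈ {1,…,n} : σ^k(i) = i for some integer k ≥ 1}, i.e., h(0)/n times the number of periodic points of σ. -/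
/-! Put `v = f ∘ x`. Since the `x i` are distinct, continuous functions interpolate arbitrary
values at them (Tietze), so the sums in `gR` are exactly `∑ i, h (v i - v (σ i))` for arbitrary
`v`. The map `σ` permutes its set `P` of periodic points, so over `P` the differences
`v i - v (σ i)` telescope to `0` and Jensen bounds their contribution by `#P * h 0`; off `P`
the terms are `≤ 0`. Conversely, taking `v` to be `t` times the number of steps a point needs
to reach `P` makes the differences `0` on `P` and `t` off `P`, and `h t` comes arbitrarily close
to `0`. -/

open scoped BigOperators

/-- The RpGAN loss g_R(Y) = (1/n) · sup over continuous f of Σ_i h(f(x_i) − f(y_i)). -/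
noncomputable def gR {d n : ℕ} (h : ℝ → ℝ)
    (x Y : Fin n → EuclideanSpace ℝ (Fin d)) : ℝ :=
  (1 / (n : ℝ)) * sSup {s : ℝ |
    ∃ f : EuclideanSpace ℝ (Fin d) → ℝ, Continuous f ∧
      s = ∑ i, h (f (x i) - f (Y i))}

open Function Set Finset

universe u v

namespace Function

variable {α : Type*} {f : α → α} {x : α}

theorem exists_iterate_mem_periodicPts [Finite α] (f : α → α) (x : α) :
    ∃ m, f^[m] x ∈ periodicPts f := by
  obtain ⟨a, b, hab, he⟩ := Finite.exists_ne_map_eq_of_infinite (f^[·] x)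
  wlog hlt : a < b generalizing a b
  · exact this b a hab.symm he.symm (hab.lt_or_gt.resolve_left hlt)
  refine ⟨a, mk_mem_periodicPts (n := b - a) (by omega) ?_⟩
  rw [IsPeriodicPt, IsFixedPt, ← iterate_add_apply, Nat.sub_add_cancel hlt.le]
  exact he.symm

open Classical in
noncomputable def periodicDepth [Finite α] (f : α → α) (x : α) : ℕ :=
  Nat.find (exists_iterate_mem_periodicPts f x)

variable [Finite α]

theorem periodicDepth_eq_zero_iff : periodicDepth f x = 0 ↔ x ∈ periodicPts f := by
  simp [periodicDepth]

theorem periodicDepth_eq_succ_apply (hx : x ∉ periodicPts f) :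
    periodicDepth f x = periodicDepth f (f x) + 1 := by
  classical exact Nat.find_comp_succ _ _ (by simpa using hx)

end Function

theorem Finset.sum_sub_apply_eq_zero_of_bijOn {α M : Type*} [AddCommGroup M] {f : α → α}
    {s : Finset α} (hf : BijOn f s s) (v : α → M) : ∑ x ∈ s, (v x - v (f x)) = 0 := by
  rw [sum_sub_distrib, sub_eq_zero]
  exact (sum_nbij f (fun _ hx => hf.mapsTo hx) hf.injOn hf.surjOn fun _ _ => rfl).symm

theorem ConcaveOn.sum_le_card_mul_of_sum_eq_zero {ι : Type*} {h : ℝ → ℝ}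
    (hh : ConcaveOn ℝ univ h) (s : Finset ι) {p : ι → ℝ} (hp : ∑ i ∈ s, p i = 0) :
    ∑ i ∈ s, h (p i) ≤ #s * h 0 := by
  rcases s.eq_empty_or_nonempty with rfl | hs
  · simp
  have hcard : (0 : ℝ) < #s := Nat.cast_pos.2 hs.card_pos
  have := hh.le_map_sum (t := s) (w := fun _ => (#s : ℝ)⁻¹) (p := p)
    (fun _ _ => by positivity) (by simp [hcard.ne']) (fun _ _ => mem_univ _)
  simp only [smul_eq_mul, ← mul_sum, hp, mul_zero] at this
  rwa [inv_mul_le_iff₀ hcard] at this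

theorem exists_continuousMap_apply_eq {ι : Type*} {X : Type u} {Y : Type v} [Finite ι]
    [TopologicalSpace X] [NormalSpace X] [T2Space X] [TopologicalSpace Y]
    [TietzeExtension.{u, v} Y] {x : ι → X}
    (hx : Injective x) (v : ι → Y) : ∃ g : C(X, Y), ∀ i, g (x i) = v i := by
  let _ : TopologicalSpace ι := ⊥
  have : DiscreteTopology ι := ⟨rfl⟩
  obtain ⟨g, hg⟩ := ContinuousMap.exists_extension'
    ((continuous_of_discreteTopology (f := x)).isClosedEmbedding hx)
    ⟨v, continuous_of_discreteTopology⟩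
  exact ⟨g, fun i => congrFun hg i⟩

section Loss

variable {α : Type*} [Fintype α] {h : ℝ → ℝ}

theorem ConcaveOn.sum_sub_apply_le (hh : ConcaveOn ℝ univ h) (hle : ∀ t, h t ≤ 0)
    (f : α → α) (v : α → ℝ) :
    ∑ x, h (v x - v (f x)) ≤ (periodicPts f).ncard * h 0 := by
  classical
  calc ∑ x, h (v x - v (f x)) ≤ ∑ x ∈ (periodicPts f).toFinset, h (v x - v (f x)) :=
        sum_le_sum_of_subset_of_nonpos' (subset_univ _) fun _ _ _ => hle _
    _ ≤ #(periodicPts f).toFinset * h 0 :=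
        hh.sum_le_card_mul_of_sum_eq_zero _ <|
          sum_sub_apply_eq_zero_of_bijOn (by simpa using bijOn_periodicPts f) v
    _ = (periodicPts f).ncard * h 0 := by rw [ncard_eq_toFinset_card']

theorem sum_sub_apply_periodicDepth (f : α → α) (t : ℝ) :
    ∑ x, h (t * periodicDepth f x - t * periodicDepth f (f x))
      = (periodicPts f).ncard * h 0 + (periodicPts f)ᶜ.ncard * h t := by
  classical
  have hpt : ∀ x, h (t * periodicDepth f x - t * periodicDepth f (f x))
      = if x ∈ periodicPts f then h 0 else h t := by
    intro x
    split_ifs with hx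
    · rw [periodicDepth_eq_zero_iff.2 hx,
        periodicDepth_eq_zero_iff.2 ((bijOn_periodicPts f).mapsTo hx)]
      simp
    · rw [periodicDepth_eq_succ_apply hx]
      congr 1
      push_cast
      ring
  simp only [hpt, sum_ite, sum_const, nsmul_eq_mul, ncard_eq_toFinset_card',
    ← filter_mem_univ_eq_toFinset, mem_compl_iff]

theorem ConcaveOn.isLUB_range_sum_sub_apply (hh : ConcaveOn ℝ univ h)
    (hsup : IsLUB (range h) 0) (f : α → α) :
    IsLUB (range fun v : α → ℝ => ∑ x, h (v x - v (f x))) ((periodicPts f).ncard * h 0) := by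
  have hle : ∀ t, h t ≤ 0 := fun t => hsup.1 (mem_range_self t)
  refine ⟨forall_mem_range.2 (hh.sum_sub_apply_le hle f), fun b hb => ?_⟩
  have hm : (0 : ℝ) ≤ (periodicPts f)ᶜ.ncard := Nat.cast_nonneg _
  have hbound : b - (periodicPts f).ncard * h 0 ∈
      upperBounds (((periodicPts f)ᶜ.ncard * · : ℝ → ℝ) '' range h) := by
    rintro _ ⟨_, ⟨t, rfl⟩, rfl⟩
    have := hb (mem_range_self fun x => t * periodicDepth f x)
    rw [sum_sub_apply_periodicDepth] at this
    linarith
  simpa using (hsup.mul_left hm).2 hbound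

end Loss

theorem stmt5_general {d n : ℕ}
    (x : Fin n → EuclideanSpace ℝ (Fin d)) (hx : Function.Injective x)
    (h : ℝ → ℝ) (hconc : ConcaveOn ℝ Set.univ h)
    (hsup : IsLUB (Set.range h) 0)
    (Y : Fin n → EuclideanSpace ℝ (Fin d))
    (σ : Fin n → Fin n) (hσ : ∀ i, Y i = x (σ i)) :
    gR h x Y
      = (h 0 / (n : ℝ)) *
          (Set.ncard {i : Fin n | ∃ k : ℕ, 1 ≤ k ∧ σ^[k] i = i} : ℝ) := by
  have hloss : {s : ℝ | ∃ f : EuclideanSpace ℝ (Fin d) → ℝ, Continuous f ∧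
      s = ∑ i, h (f (x i) - f (Y i))}
        = range fun v : Fin n → ℝ => ∑ i, h (v i - v (σ i)) := by
    ext s
    constructor
    · rintro ⟨f, -, rfl⟩
      exact ⟨f ∘ x, by simp [hσ]⟩
    · rintro ⟨v, rfl⟩
      obtain ⟨g, hg⟩ := exists_continuousMap_apply_eq hx v
      exact ⟨g, g.continuous, by simp [hσ, hg]⟩
  have hper : {i : Fin n | ∃ k : ℕ, 1 ≤ k ∧ σ^[k] i = i} = periodicPts σ := rfl
  rw [gR, hloss, (hconc.isLUB_range_sum_sub_apply hsup σ).csSup_eq (range_nonempty _), hper]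
  ring

theorem stmt5 {d n : ℕ} (hd : 1 ≤ d) (hn : 1 ≤ n)
    (x : Fin n → EuclideanSpace ℝ (Fin d)) (hx : Function.Injective x)
    (h : ℝ → ℝ) (hconc : ConcaveOn ℝ Set.univ h)
    (hsup : IsLUB (Set.range h) 0) (h0 : h 0 < 0)
    (Y : Fin n → EuclideanSpace ℝ (Fin d))
    (σ : Fin n → Fin n) (hσ : ∀ i, Y i = x (σ i)) :
    gR h x Y
      = (h 0 / (n : ℝ)) *
          (Set.ncard {i : Fin n | ∃ k : ℕ, 1 ≤ k ∧ σ^[k] i = i} : ℝ) :=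
  stmt5_general x hx h hconc hsup Y σ hσ
end
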